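/- (PolyDot coefficient extraction recovers the matrix product) Let s,t ≥ 1, let A_{i,j} (0≤i<t, 0≤j<s) and B_{k,l} (0≤k<s, 0≤l<t) be blocks over a commutative ring, and let P_C(x) = (Σ_{i,j} A_{i,j} x^{tj+i})(Σ_{k,l} B_{k,l} x^{t(2s−1)l+t(s−1−k)}). Then for each 0 ≤ i, l ≤ t−1, the coefficient of x^{t(2s−1)l + t(s−1) + i} in P_C equals Σ_{k=0}^{s−1} A_{i,k} B_{k,l} = C_{i,l}. -/

import Mathlib

open Polynomial Finset

theorem Polynomial.coeff_sum_C_mul_X_pow_mul_sum {R ι κ : Type*} [Semiring R]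
    (s : Finset ι) (u : Finset κ) (f : ι → R) (g : κ → R) (e : ι → ℕ) (d : κ → ℕ) (n : ℕ) :
    ((∑ a ∈ s, C (f a) * X ^ e a) * ∑ b ∈ u, C (g b) * X ^ d b).coeff n =
      ∑ a ∈ s, ∑ b ∈ u, if e a + d b = n then f a * g b else 0 := by
  simp only [C_mul_X_pow_eq_monomial, sum_mul, mul_sum, monomial_mul_monomial,
    finsetSum_coeff, coeff_monomial]
  exact sum_comm

theorem Nat.mul_add_eq_mul_add_iff {n a b c d : ℕ} (hb : b < n) (hd : d < n) :
    n * a + b = n * c + d ↔ a = c ∧ b = d := by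
  refine ⟨fun h => ?_, fun ⟨hac, hbd⟩ => hac ▸ hbd ▸ rfl⟩
  have hn : 0 < n := by omega
  have hdiv := congrArg (· / n) h
  have hmod := congrArg (· % n) h
  simp only [Nat.mul_add_div hn, Nat.div_eq_of_lt hb, Nat.div_eq_of_lt hd, Nat.mul_add_mod,
    Nat.mod_eq_of_lt hb, Nat.mod_eq_of_lt hd, add_zero] at hdiv hmod
  exact ⟨hdiv, hmod⟩

/-- Read in base `t` and then in base `2s - 1`, the sum of exponents has digits
`i'`, `j + (s - 1 - k)`, `l'`; the middle digit is below `2s - 1` and equals `s - 1` iff `j = k`. -/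
theorem polyDot_exponent_add_eq_iff {s t i j k l i' l' : ℕ} (hi : i < t) (hi' : i' < t)
    (hj : j < s) (hk : k < s) :
    t * j + i' + (t * (2 * s - 1) * l' + t * (s - 1 - k)) = t * (2 * s - 1) * l + t * (s - 1) + i ↔
      i' = i ∧ j = k ∧ l' = l := by
  have hlhs : t * j + i' + (t * (2 * s - 1) * l' + t * (s - 1 - k)) =
      t * ((2 * s - 1) * l' + (j + (s - 1 - k))) + i' := by ring
  have hrhs : t * (2 * s - 1) * l + t * (s - 1) + i = t * ((2 * s - 1) * l + (s - 1)) + i := by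
    ring
  rw [hlhs, hrhs, Nat.mul_add_eq_mul_add_iff hi' hi,
    Nat.mul_add_eq_mul_add_iff (by omega) (by omega)]
  omega

theorem stmt_18_general {R : Type*} [CommRing R] (s t : ℕ)
    (A B : ℕ → ℕ → R) :
    ∀ i l : ℕ, i < t → l < t →
      Polynomial.coeff
        ((∑ i' ∈ Finset.range t, ∑ j ∈ Finset.range s,
            Polynomial.C (A i' j) * Polynomial.X ^ (t * j + i')) *
          (∑ k ∈ Finset.range s, ∑ l' ∈ Finset.range t,
            Polynomial.C (B k l') * Polynomial.X ^ (t * (2 * s - 1) * l' + t * (s - 1 - k))))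
        (t * (2 * s - 1) * l + t * (s - 1) + i) =
      ∑ k ∈ Finset.range s, A i k * B k l := by
  intro i l hi hl
  rw [← sum_product' (range t) (range s), ← sum_product' (range s) (range t),
    coeff_sum_C_mul_X_pow_mul_sum]
  simp only [sum_product]
  calc _ = ∑ i' ∈ range t, ∑ j ∈ range s, ∑ k ∈ range s, ∑ l' ∈ range t,
        if i' = i ∧ j = k ∧ l' = l then A i' j * B k l' else 0 := by
        refine sum_congr rfl fun i' hi' => sum_congr rfl fun j hj => sum_congr rfl fun k hk =>
          sum_congr rfl fun l' _ => if_congr ?_ rfl rfl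
        simp only [mem_range] at hi' hj hk
        exact polyDot_exponent_add_eq_iff hi hi' hj hk
    _ = _ := by simp +contextual [ite_and, hi, hl]

theorem stmt_18 {R : Type*} [CommRing R] (s t : ℕ) (hs : 1 ≤ s) (ht : 1 ≤ t)
    (A B : ℕ → ℕ → R) :
    ∀ i l : ℕ, i < t → l < t →
      Polynomial.coeff
        ((∑ i' ∈ Finset.range t, ∑ j ∈ Finset.range s,
            Polynomial.C (A i' j) * Polynomial.X ^ (t * j + i')) *
          (∑ k ∈ Finset.range s, ∑ l' ∈ Finset.range t,
            Polynomial.C (B k l') * Polynomial.X ^ (t * (2 * s - 1) * l' + t * (s - 1 - k))))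
        (t * (2 * s - 1) * l + t * (s - 1) + i) =
      ∑ k ∈ Finset.range s, A i k * B k l :=
  stmt_18_general s t A B
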